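/- arXiv:2403.12673 — 4 statements merged into one kernel-verified Lean document; each statement's English description precedes it below -/
import Mathlib

section
/- Let (A, B, C) be a recollement of abelian categories in which A, B and C all have enough projectives and enough injectives and both i^* and i^! are exact, let n ≥ 1, let (T1, F1) and (T2, F2) be n-cotorsion pairs in A and C respectively, and let (T, F) be the glued pair in B. Then T1 = i^*(T), F1 = i^!(F), T2 = j^*(T) and F2 = j^*(F). -/
open CategoryTheory CategoryTheory.Limits CategoryTheory.Abelian ZeroObject

universe v u

namespace PaperRecollement

/-- The `k`-th Ext group of two objects in an abelian category,
as a type (it carries an `AddCommGroup` structure). -/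
noncomputable def ExtGrp {D : Type u} [Category.{v} D] [Abelian D] (X Y : D) (k : ℕ) :
    Type (max u v) :=
  letI : HasDerivedCategory.{max u v} D := HasDerivedCategory.standard D
  letI : HasExt.{max u v} D := hasExt_of_hasDerivedCategory D
  Abelian.Ext X Y k

noncomputable instance {D : Type u} [Category.{v} D] [Abelian D] (X Y : D) (k : ℕ) :
    AddCommGroup (ExtGrp X Y k) :=
  letI : HasDerivedCategory.{max u v} D := HasDerivedCategory.standard D
  letI : HasExt.{max u v} D := hasExt_of_hasDerivedCategory D
  inferInstanceAs (AddCommGroup (Abelian.Ext X Y k))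

/-- `Ext^k(X, Y) = 0`. -/
def ExtVanish {D : Type u} [Category.{v} D] [Abelian D] (X Y : D) (k : ℕ) : Prop :=
  Subsingleton (ExtGrp X Y k)

/-- A functor between abelian categories is exact if it is additive and preserves
short exact sequences. -/
structure IsExactFunctor {A : Type u} {B : Type u} [Category.{v} A] [Category.{v} B]
    [Abelian A] [Abelian B] (F : A ⥤ B) : Prop where
  additive : F.Additive
  preserves_shortExact : ∀ ⦃X Y Z : A⦄ (f : X ⟶ Y) (g : Y ⟶ Z) (w : f ≫ g = 0)
    (w' : F.map f ≫ F.map g = 0),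
    (ShortComplex.mk f g w).ShortExact → (ShortComplex.mk (F.map f) (F.map g) w').ShortExact

/-- A recollement of abelian categories. -/
structure Recollement (A B C : Type u) [Category.{v} A] [Category.{v} B] [Category.{v} C]
    [Abelian A] [Abelian B] [Abelian C] where
  /-- `i_* : A ⥤ B` -/
  iStar : A ⥤ B
  /-- `i^* : B ⥤ A` -/
  iUStar : B ⥤ A
  /-- `i^! : B ⥤ A` -/
  iShriek : B ⥤ A
  /-- `j^* : B ⥤ C` -/
  jUStar : B ⥤ C
  /-- `j_! : C ⥤ B` -/
  jShriek : C ⥤ B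
  /-- `j_* : C ⥤ B` -/
  jStar : C ⥤ B
  adj₁ : iUStar ⊣ iStar
  adj₂ : iStar ⊣ iShriek
  adj₃ : jShriek ⊣ jUStar
  adj₄ : jUStar ⊣ jStar
  iUStar_additive : iUStar.Additive
  iShriek_additive : iShriek.Additive
  jShriek_additive : jShriek.Additive
  jStar_additive : jStar.Additive
  iStar_full : iStar.Full
  iStar_faithful : iStar.Faithful
  jShriek_full : jShriek.Full
  jShriek_faithful : jShriek.Faithful
  jStar_full : jStar.Full
  jStar_faithful : jStar.Faithful
  iStar_exact : IsExactFunctor iStar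
  jUStar_exact : IsExactFunctor jUStar
  essIm_iStar_eq_ker_jUStar : ∀ X : B,
    (∃ Y : A, Nonempty (iStar.obj Y ≅ X)) ↔ Nonempty (jUStar.obj X ≅ 0)

variable {D : Type u} [Category.{v} D] [Abelian D]

/-- `Z^∧_m` : objects with a `Z`-resolution of length `m`. -/
def ResClass (Z : Set D) : ℕ → Set D
  | 0 => {C | ∃ Z₀ ∈ Z, Nonempty (Z₀ ≅ C)}
  | (m + 1) => {C | ∃ (K X : D) (f : K ⟶ X) (g : X ⟶ C) (w : f ≫ g = 0),
      (ShortComplex.mk f g w).ShortExact ∧ X ∈ Z ∧ K ∈ ResClass Z m}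

/-- `Z^∨_m` : objects with a `Z`-coresolution of length `m`. -/
def CoresClass (Z : Set D) : ℕ → Set D
  | 0 => {C | ∃ Z₀ ∈ Z, Nonempty (C ≅ Z₀)}
  | (m + 1) => {C | ∃ (X K : D) (f : C ⟶ X) (g : X ⟶ K) (w : f ≫ g = 0),
      (ShortComplex.mk f g w).ShortExact ∧ X ∈ Z ∧ K ∈ CoresClass Z m}

/-- Left `n`-cotorsion pair. -/
structure IsLeftNCotorsionPair (n : ℕ) (𝒳 𝒴 : Set D) : Prop where
  closed_summands : ∀ ⦃X X' : D⦄, X ∈ 𝒳 →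
    (∃ (s : X' ⟶ X) (r : X ⟶ X'), s ≫ r = 𝟙 X') → X' ∈ 𝒳
  ext_vanish : ∀ ⦃X Y : D⦄, X ∈ 𝒳 → Y ∈ 𝒴 → ∀ k, 1 ≤ k → k ≤ n → ExtVanish X Y k
  exists_ses : ∀ C : D, ∃ (K X : D) (f : K ⟶ X) (g : X ⟶ C) (w : f ≫ g = 0),
    (ShortComplex.mk f g w).ShortExact ∧ X ∈ 𝒳 ∧ K ∈ ResClass 𝒴 (n - 1)

/-- Right `n`-cotorsion pair. -/
structure IsRightNCotorsionPair (n : ℕ) (𝒳 𝒴 : Set D) : Prop where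
  closed_summands : ∀ ⦃Y Y' : D⦄, Y ∈ 𝒴 →
    (∃ (s : Y' ⟶ Y) (r : Y ⟶ Y'), s ≫ r = 𝟙 Y') → Y' ∈ 𝒴
  ext_vanish : ∀ ⦃X Y : D⦄, X ∈ 𝒳 → Y ∈ 𝒴 → ∀ k, 1 ≤ k → k ≤ n → ExtVanish X Y k
  exists_ses : ∀ C : D, ∃ (Y Z : D) (f : C ⟶ Y) (g : Y ⟶ Z) (w : f ≫ g = 0),
    (ShortComplex.mk f g w).ShortExact ∧ Y ∈ 𝒴 ∧ Z ∈ CoresClass 𝒳 (n - 1)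

/-- `n`-cotorsion pair. -/
def IsNCotorsionPair (n : ℕ) (𝒳 𝒴 : Set D) : Prop :=
  IsLeftNCotorsionPair n 𝒳 𝒴 ∧ IsRightNCotorsionPair n 𝒳 𝒴

/-- Hereditary `n`-cotorsion pair. -/
def IsHereditaryNCotorsionPair (n : ℕ) (𝒳 𝒴 : Set D) : Prop :=
  IsNCotorsionPair n 𝒳 𝒴 ∧ ∀ ⦃X Y : D⦄, X ∈ 𝒳 → Y ∈ 𝒴 → ExtVanish X Y (n + 1)

/-- The image class of a class of objects under a functor: objects isomorphic to
`F.obj X` for some `X ∈ S`. -/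
def imgClass {A B : Type u} [Category.{v} A] [Category.{v} B] (F : A ⥤ B) (S : Set A) :
    Set B :=
  {Y | ∃ X ∈ S, Nonempty (F.obj X ≅ Y)}

/-- A pseudo cluster tilting subcategory of an abelian category, given as a class of
objects: a full additive iso-closed subcategory admitting the two approximation
short exact sequences. -/
structure IsPseudoClusterTilting (T : Set D) : Prop where
  iso_closed : ∀ ⦃X Y : D⦄, X ∈ T → Nonempty (X ≅ Y) → Y ∈ T
  zero_mem : (0 : D) ∈ T
  biprod_mem : ∀ ⦃X Y : D⦄, X ∈ T → Y ∈ T → (X ⊞ Y) ∈ T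
  left_approx : ∀ C : D, ∃ (T₁ T₂ : D) (f : C ⟶ T₁) (g : T₁ ⟶ T₂) (w : f ≫ g = 0),
    (ShortComplex.mk f g w).ShortExact ∧ T₁ ∈ T ∧ T₂ ∈ T ∧
      ∀ T' ∈ T, ∀ h : C ⟶ T', ∃ k : T₁ ⟶ T', f ≫ k = h
  right_approx : ∀ C : D, ∃ (T₃ T₄ : D) (f : T₃ ⟶ T₄) (g : T₄ ⟶ C) (w : f ≫ g = 0),
    (ShortComplex.mk f g w).ShortExact ∧ T₃ ∈ T ∧ T₄ ∈ T ∧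
      ∀ T' ∈ T, ∀ h : T' ⟶ C, ∃ k : T' ⟶ T₄, k ≫ g = h


variable {A B C : Type u} [Category.{v} A] [Category.{v} B] [Category.{v} C]
  [Abelian A] [Abelian B] [Abelian C]

/-!
The fully faithful functors of the recollement supply preimages: for `Y ∈ T₁` the object
`i_* Y` lies in `T`, since `i^* i_* Y ≅ Y` and `j^* i_* Y = 0`, and both classes of an
`n`-cotorsion pair contain the zero objects. Likewise `i_* Y` serves `F₁`, `j_! Y` serves `T₂`
and `j_* Y` serves `F₂`.
-/

section CotorsionPair

variable {n : ℕ} {𝒳 𝒴 : Set D}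

lemma IsLeftNCotorsionPair.mem_of_iso (h : IsLeftNCotorsionPair n 𝒳 𝒴) ⦃X Y : D⦄
    (hX : X ∈ 𝒳) (e : X ≅ Y) : Y ∈ 𝒳 :=
  h.closed_summands hX ⟨e.inv, e.hom, e.inv_hom_id⟩

lemma IsRightNCotorsionPair.mem_of_iso (h : IsRightNCotorsionPair n 𝒳 𝒴) ⦃X Y : D⦄
    (hX : X ∈ 𝒴) (e : X ≅ Y) : Y ∈ 𝒴 :=
  h.closed_summands hX ⟨e.inv, e.hom, e.inv_hom_id⟩

/-- A zero object is a retract of its `𝒳`-approximation. -/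
lemma IsLeftNCotorsionPair.mem_of_isZero (h : IsLeftNCotorsionPair n 𝒳 𝒴) {Z : D}
    (hZ : IsZero Z) : Z ∈ 𝒳 := by
  obtain ⟨_, X, _, _, _, _, hX, _⟩ := h.exists_ses Z
  exact h.closed_summands hX ⟨0, 0, hZ.eq_of_src _ _⟩

lemma IsRightNCotorsionPair.mem_of_isZero (h : IsRightNCotorsionPair n 𝒳 𝒴) {Z : D}
    (hZ : IsZero Z) : Z ∈ 𝒴 := by
  obtain ⟨Y, _, _, _, _, _, hY, _⟩ := h.exists_ses Z
  exact h.closed_summands hY ⟨0, 0, hZ.eq_of_src _ _⟩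

end CotorsionPair

lemma eq_imgClass_of_forall_mem {A B : Type u} [Category.{v} A] [Category.{v} B]
    {F : B ⥤ A} {S : Set B} {S' : Set A} (hS' : ∀ ⦃X Y : A⦄, X ∈ S' → (X ≅ Y) → Y ∈ S')
    (hmaps : ∀ X ∈ S, F.obj X ∈ S') (hsurj : ∀ Y ∈ S', ∃ X ∈ S, Nonempty (F.obj X ≅ Y)) :
    S' = imgClass F S :=
  subset_antisymm hsurj fun _ ⟨X, hX, ⟨e⟩⟩ => hS' (hmaps X hX) e

namespace Recollement

variable (R : Recollement A B C)

noncomputable def iUStarIStarIso (X : A) : R.iUStar.obj (R.iStar.obj X) ≅ X :=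
  have := R.iStar_full
  have := R.iStar_faithful
  asIso (R.adj₁.counit.app X)

noncomputable def iShriekIStarIso (X : A) : X ≅ R.iShriek.obj (R.iStar.obj X) :=
  have := R.iStar_full
  have := R.iStar_faithful
  asIso (R.adj₂.unit.app X)

noncomputable def jUStarJShriekIso (X : C) : X ≅ R.jUStar.obj (R.jShriek.obj X) :=
  have := R.jShriek_full
  have := R.jShriek_faithful
  asIso (R.adj₃.unit.app X)

noncomputable def jUStarJStarIso (X : C) : R.jUStar.obj (R.jStar.obj X) ≅ X :=
  have := R.jStar_full
  have := R.jStar_faithful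
  asIso (R.adj₄.counit.app X)

lemma isZero_jUStar_iStar (X : A) : IsZero (R.jUStar.obj (R.iStar.obj X)) :=
  have ⟨e⟩ := (R.essIm_iStar_eq_ker_jUStar (R.iStar.obj X)).1 ⟨X, ⟨Iso.refl _⟩⟩
  (isZero_zero C).of_iso e

/-- By adjunction, `A(i^* j_! X, Y) ≅ B(j_! X, i_* Y) ≅ C(X, j^* i_* Y) = 0`. -/
lemma isZero_iUStar_jShriek (X : C) : IsZero (R.iUStar.obj (R.jShriek.obj X)) := by
  rw [IsZero.iff_id_eq_zero]
  let Y := R.iUStar.obj (R.jShriek.obj X)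
  have : Subsingleton (X ⟶ R.jUStar.obj (R.iStar.obj Y)) :=
    ⟨(R.isZero_jUStar_iStar Y).eq_of_tgt⟩
  have : Subsingleton (R.jShriek.obj X ⟶ R.iStar.obj Y) := (R.adj₃.homEquiv _ _).subsingleton
  have : Subsingleton (Y ⟶ Y) := (R.adj₁.homEquiv _ _).subsingleton
  exact Subsingleton.elim _ _

/-- By adjunction, `A(Y, i^! j_* X) ≅ B(i_* Y, j_* X) ≅ C(j^* i_* Y, X) = 0`. -/
lemma isZero_iShriek_jStar (X : C) : IsZero (R.iShriek.obj (R.jStar.obj X)) := by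
  rw [IsZero.iff_id_eq_zero]
  let Y := R.iShriek.obj (R.jStar.obj X)
  have : Subsingleton (R.jUStar.obj (R.iStar.obj Y) ⟶ X) :=
    ⟨(R.isZero_jUStar_iStar Y).eq_of_src⟩
  have : Subsingleton (R.iStar.obj Y ⟶ R.jStar.obj X) := (R.adj₄.homEquiv _ _).symm.subsingleton
  have : Subsingleton (Y ⟶ Y) := (R.adj₂.homEquiv _ _).symm.subsingleton
  exact Subsingleton.elim _ _

end Recollement

theorem glued_nCotorsionPair_restrict_general
    (R : Recollement A B C)
    (n : ℕ) (T₁ F₁ : Set A) (T₂ F₂ : Set C)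
    (h₁ : IsNCotorsionPair n T₁ F₁) (h₂ : IsNCotorsionPair n T₂ F₂) :
    T₁ = imgClass R.iUStar {X : B | R.iUStar.obj X ∈ T₁ ∧ R.jUStar.obj X ∈ T₂} ∧
    F₁ = imgClass R.iShriek {X : B | R.iShriek.obj X ∈ F₁ ∧ R.jUStar.obj X ∈ F₂} ∧
    T₂ = imgClass R.jUStar {X : B | R.iUStar.obj X ∈ T₁ ∧ R.jUStar.obj X ∈ T₂} ∧
    F₂ = imgClass R.jUStar {X : B | R.iShriek.obj X ∈ F₁ ∧ R.jUStar.obj X ∈ F₂} := by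
  obtain ⟨hT₁, hF₁⟩ := h₁
  obtain ⟨hT₂, hF₂⟩ := h₂
  refine ⟨?_, ?_, ?_, ?_⟩
  · exact eq_imgClass_of_forall_mem hT₁.mem_of_iso (fun _ hX => hX.1) fun Y hY =>
      ⟨R.iStar.obj Y, ⟨hT₁.mem_of_iso hY (R.iUStarIStarIso Y).symm,
        hT₂.mem_of_isZero (R.isZero_jUStar_iStar Y)⟩, ⟨R.iUStarIStarIso Y⟩⟩
  · exact eq_imgClass_of_forall_mem hF₁.mem_of_iso (fun _ hX => hX.1) fun Y hY =>
      ⟨R.iStar.obj Y, ⟨hF₁.mem_of_iso hY (R.iShriekIStarIso Y),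
        hF₂.mem_of_isZero (R.isZero_jUStar_iStar Y)⟩, ⟨(R.iShriekIStarIso Y).symm⟩⟩
  · exact eq_imgClass_of_forall_mem hT₂.mem_of_iso (fun _ hX => hX.2) fun Y hY =>
      ⟨R.jShriek.obj Y, ⟨hT₁.mem_of_isZero (R.isZero_iUStar_jShriek Y),
        hT₂.mem_of_iso hY (R.jUStarJShriekIso Y)⟩, ⟨(R.jUStarJShriekIso Y).symm⟩⟩
  · exact eq_imgClass_of_forall_mem hF₂.mem_of_iso (fun _ hX => hX.2) fun Y hY =>
      ⟨R.jStar.obj Y, ⟨hF₁.mem_of_isZero (R.isZero_iShriek_jStar Y),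
        hF₂.mem_of_iso hY (R.jUStarJStarIso Y).symm⟩, ⟨R.jUStarJStarIso Y⟩⟩

/-- the glued pair restricts back to the original `n`-cotorsion pairs. -/
theorem glued_nCotorsionPair_restrict
    [EnoughProjectives A] [EnoughInjectives A] [EnoughProjectives B] [EnoughInjectives B]
    [EnoughProjectives C] [EnoughInjectives C]
    (R : Recollement A B C)
    (hiU : IsExactFunctor R.iUStar) (hiS : IsExactFunctor R.iShriek)
    (n : ℕ) (hn : 1 ≤ n) (T₁ F₁ : Set A) (T₂ F₂ : Set C)
    (h₁ : IsNCotorsionPair n T₁ F₁) (h₂ : IsNCotorsionPair n T₂ F₂) :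
    T₁ = imgClass R.iUStar {X : B | R.iUStar.obj X ∈ T₁ ∧ R.jUStar.obj X ∈ T₂} ∧
    F₁ = imgClass R.iShriek {X : B | R.iShriek.obj X ∈ F₁ ∧ R.jUStar.obj X ∈ F₂} ∧
    T₂ = imgClass R.jUStar {X : B | R.iUStar.obj X ∈ T₁ ∧ R.jUStar.obj X ∈ T₂} ∧
    F₂ = imgClass R.jUStar {X : B | R.iShriek.obj X ∈ F₁ ∧ R.jUStar.obj X ∈ F₂} :=
  glued_nCotorsionPair_restrict_general R n T₁ F₁ T₂ F₂ h₁ h₂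

end PaperRecollement
end

section
/- Let (A, B, C) be a recollement of abelian categories. If B has enough projectives and i^* is exact, then for every object X of B, every object Y of A, and every integer k ≥ 1 there is an isomorphism of abelian groups Ext^k_A(i^*(X), Y) ≅ Ext^k_B(X, i_*(Y)). -/
open CategoryTheory CategoryTheory.Limits CategoryTheory.Abelian ZeroObject

universe v u

namespace PaperRecollement

variable {D : Type u} [Category.{v} D] [Abelian D]

variable {A B C : Type u} [Category.{v} A] [Category.{v} B] [Category.{v} C]
  [Abelian A] [Abelian B] [Abelian C]

section Aux

variable {A' B' : Type u} [Category.{v} A'] [Category.{v} B'] [Abelian A'] [Abelian B']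

/-- An exact functor (in the sense of `IsExactFunctor`) preserves finite limits and
finite colimits. -/
lemma IsExactFunctor.preservesFiniteLimits_and_colimits {F : B' ⥤ A'} (h : IsExactFunctor F) :
    PreservesFiniteLimits F ∧ PreservesFiniteColimits F := by
  haveI := h.additive
  refine ((Functor.exact_tfae F).out 0 3).1 (fun S hS => ?_)
  exact h.preserves_shortExact S.f S.g S.zero
    (by rw [← F.map_comp, S.zero, F.map_zero]) hS

/-- An adjunction between additive functors induces an adjunction between the functors
on categories of homological complexes. -/
noncomputable def mapHomologicalComplexAdjunction {F : B' ⥤ A'} {G : A' ⥤ B'} (adj : F ⊣ G)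
    [F.Additive] [G.Additive] {ι : Type*} (c : ComplexShape ι) :
    F.mapHomologicalComplex c ⊣ G.mapHomologicalComplex c :=
  Adjunction.mkOfUnitCounit
    { unit :=
        { app := fun K =>
            { f := fun i => adj.unit.app (K.X i)
              comm' := fun i j _ => (adj.unit.naturality (K.d i j)).symm }
          naturality := fun K L φ => by
            ext i
            exact (adj.unit.naturality (φ.f i)) }
      counit :=
        { app := fun K =>
            { f := fun i => adj.counit.app (K.X i)
              comm' := fun i j _ => (adj.counit.naturality (K.d i j)).symm }
          naturality := fun K L φ => by
            ext i
            exact (adj.counit.naturality (φ.f i)) }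
      left_triangle := by
        ext K i
        simp
        exact adj.left_triangle_components (K.X i)
      right_triangle := by
        ext K i
        simp
        exact adj.right_triangle_components (K.X i) }

/-- Pre/post-composition with isomorphisms, as an additive equivalence of Hom groups. -/
noncomputable def homAddCongr {D' : Type*} [Category D'] [Preadditive D'] {W X Y Z : D'}
    (e₁ : W ≅ X) (e₂ : Y ≅ Z) : (W ⟶ Y) ≃+ (X ⟶ Z) :=
  { e₁.homCongr e₂ with
    map_add' := fun f g => by simp [Iso.homCongr, Preadditive.add_comp, Preadditive.comp_add] }

/-- The hom-equivalence of an adjunction with additive right adjoint, as an additive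
equivalence. -/
noncomputable def adjHomAddEquiv {C₁ C₂ : Type*} [Category C₁] [Category C₂]
    [Preadditive C₁] [Preadditive C₂] {F : C₁ ⥤ C₂} {G : C₂ ⥤ C₁} [G.Additive] (adj : F ⊣ G)
    (X : C₁) (Y : C₂) : (F.obj X ⟶ Y) ≃+ (X ⟶ G.obj Y) :=
  { adj.homEquiv X Y with
    map_add' := fun f g => by
      simp [Adjunction.homEquiv_unit, Functor.map_add, Preadditive.comp_add] }

end Aux

/-- `Ext^k_A(i^*(X), Y) ≅ Ext^k_B(X, i_*(Y))`. -/
theorem ext_adjunction_iUStar [EnoughProjectives B]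
    (R : Recollement A B C) (hiU : IsExactFunctor R.iUStar)
    (X : B) (Y : A) (k : ℕ) (hk : 1 ≤ k) :
    Nonempty ((ExtGrp (R.iUStar.obj X) Y k) ≃+ (ExtGrp X (R.iStar.obj Y) k)) := by
  letI : HasDerivedCategory.{max u v} A := HasDerivedCategory.standard A
  letI : HasDerivedCategory.{max u v} B := HasDerivedCategory.standard B
  letI : HasExt.{max u v} A := hasExt_of_hasDerivedCategory A
  letI : HasExt.{max u v} B := hasExt_of_hasDerivedCategory B
  haveI : R.iUStar.Additive := hiU.additive
  haveI : R.iStar.Additive := R.iStar_exact.additive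
  obtain ⟨hl₁, hc₁⟩ := hiU.preservesFiniteLimits_and_colimits
  obtain ⟨hl₂, hc₂⟩ := R.iStar_exact.preservesFiniteLimits_and_colimits
  set F := R.iUStar with hF
  set G := R.iStar with hG
  let F' : DerivedCategory B ⥤ DerivedCategory A := F.mapDerivedCategory
  let G' : DerivedCategory A ⥤ DerivedCategory B := G.mapDerivedCategory
  letI sq₁ : CatCommSq (F.mapHomologicalComplex (ComplexShape.up ℤ))
      DerivedCategory.Q DerivedCategory.Q F' := ⟨F.mapDerivedCategoryFactors.symm⟩
  letI sq₂ : CatCommSq (G.mapHomologicalComplex (ComplexShape.up ℤ))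
      DerivedCategory.Q DerivedCategory.Q G' := ⟨G.mapDerivedCategoryFactors.symm⟩
  let adjD : F' ⊣ G' :=
    (mapHomologicalComplexAdjunction R.adj₁ (ComplexShape.up ℤ)).localization
      DerivedCategory.Q (HomologicalComplex.quasiIso B (ComplexShape.up ℤ))
      DerivedCategory.Q (HomologicalComplex.quasiIso A (ComplexShape.up ℤ)) F' G'
  let sB : B ⥤ DerivedCategory B := DerivedCategory.singleFunctor B 0
  let sA : A ⥤ DerivedCategory A := DerivedCategory.singleFunctor A 0
  let eB : sB ≅ CochainComplex.singleFunctor B 0 ⋙ DerivedCategory.Q :=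
    (SingleFunctors.evaluation _ _ 0).mapIso (DerivedCategory.singleFunctorsPostcompQIso B)
  let eA : sA ≅ CochainComplex.singleFunctor A 0 ⋙ DerivedCategory.Q :=
    (SingleFunctors.evaluation _ _ 0).mapIso (DerivedCategory.singleFunctorsPostcompQIso A)
  let isoF : F'.obj (sB.obj X) ≅ sA.obj (F.obj X) :=
    F'.mapIso (eB.app X) ≪≫ F.mapDerivedCategoryFactors.app _ ≪≫
      DerivedCategory.Q.mapIso
        ((HomologicalComplex.singleMapHomologicalComplex F (ComplexShape.up ℤ) 0).app X) ≪≫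
      (eA.app (F.obj X)).symm
  let isoG : G'.obj (sA.obj Y) ≅ sB.obj (G.obj Y) :=
    G'.mapIso (eA.app Y) ≪≫ G.mapDerivedCategoryFactors.app _ ≪≫
      DerivedCategory.Q.mapIso
        ((HomologicalComplex.singleMapHomologicalComplex G (ComplexShape.up ℤ) 0).app Y) ≪≫
      (eB.app (G.obj Y)).symm
  let e1 : ExtGrp (F.obj X) Y k ≃+ (sA.obj (F.obj X) ⟶ (sA.obj Y)⟦(k : ℤ)⟧) :=
    Ext.homAddEquiv
  let t1 : (sA.obj (F.obj X) ⟶ (sA.obj Y)⟦(k : ℤ)⟧) ≃+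
      (F'.obj (sB.obj X) ⟶ (sA.obj Y)⟦(k : ℤ)⟧) :=
    homAddCongr isoF.symm (Iso.refl _)
  let t2 : (F'.obj (sB.obj X) ⟶ (sA.obj Y)⟦(k : ℤ)⟧) ≃+
      (sB.obj X ⟶ G'.obj ((sA.obj Y)⟦(k : ℤ)⟧)) :=
    adjHomAddEquiv adjD _ _
  let t3 : (sB.obj X ⟶ G'.obj ((sA.obj Y)⟦(k : ℤ)⟧)) ≃+
      (sB.obj X ⟶ (sB.obj (G.obj Y))⟦(k : ℤ)⟧) :=
    homAddCongr (Iso.refl _)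
      ((G'.commShiftIso (k : ℤ)).app (sA.obj Y) ≪≫
        (shiftFunctor (DerivedCategory B) (k : ℤ)).mapIso isoG)
  let e2 : (sB.obj X ⟶ (sB.obj (G.obj Y))⟦(k : ℤ)⟧) ≃+ ExtGrp X (G.obj Y) k :=
    Ext.homAddEquiv.symm
  exact ⟨(((e1.trans t1).trans t2).trans t3).trans e2⟩
end PaperRecollement
end

section
/- Let (A, B, C) be a recollement of abelian categories. If i^! is exact, then for every object X of B the counit θ_X : i_*(i^!(X)) → X of the adjunction i_* ⊣ i^! and the unit ϑ_X : X → j_*(j^*(X)) of the adjunction j^* ⊣ j_* form a short exact sequence 0 → i_*(i^!(X)) → X → j_*(j^*(X)) → 0 in B. -/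
open CategoryTheory CategoryTheory.Limits CategoryTheory.Abelian ZeroObject

universe v u

namespace PaperRecollement

variable {D : Type u} [Category.{v} D] [Abelian D]

variable {A B C : Type u} [Category.{v} A] [Category.{v} B] [Category.{v} C]
  [Abelian A] [Abelian B] [Abelian C]

/-!
Objects killed by `j^*` are exactly those of the form `i_* Y`, and since `i_*` is fully faithful,
morphisms from such an object to `X` factor uniquely through the counit `θ_X`. As `j^*` is exact
and inverts the unit `ϑ_X`, it kills `ker θ_X`, `ker ϑ_X` and `coker ϑ_X`. Hence `ker θ_X = 0`,
`ker ϑ_X ↪ X` factors through `θ_X`, and `coker ϑ_X` lies in the image of `i_*`, where `θ` is an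
isomorphism. Finally `i^! j_* = 0` (it is right adjoint to `j^* i_* = 0`), so exactness of `i^!`
gives `i^! (coker ϑ_X) = 0`, whence `coker ϑ_X ≅ i_* i^! (coker ϑ_X) = 0`.
-/

theorem IsExactFunctor.mono_map {F : A ⥤ B} (hF : IsExactFunctor F) {X Y : A} (f : X ⟶ Y)
    [Mono f] : Mono (F.map f) :=
  have := hF.additive
  (hF.preserves_shortExact f (cokernel.π f) (cokernel.condition f)
    (by rw [← F.map_comp, cokernel.condition, F.map_zero])
    ⟨ShortComplex.exact_of_g_is_cokernel _ (cokernelIsCokernel f)⟩).mono_f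

theorem IsExactFunctor.epi_map {F : A ⥤ B} (hF : IsExactFunctor F) {X Y : A} (f : X ⟶ Y)
    [Epi f] : Epi (F.map f) :=
  have := hF.additive
  (hF.preserves_shortExact (kernel.ι f) f (kernel.condition f)
    (by rw [← F.map_comp, kernel.condition, F.map_zero])
    ⟨ShortComplex.exact_of_f_is_kernel _ (kernelIsKernel f)⟩).epi_g

theorem IsExactFunctor.isZero_obj_kernel {F : A ⥤ B} (hF : IsExactFunctor F) {X Y : A}
    (f : X ⟶ Y) [Mono (F.map f)] : IsZero (F.obj (kernel f)) := by
  have := hF.additive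
  have := hF.mono_map (kernel.ι f)
  exact IsZero.of_mono_eq_zero _
    (zero_of_comp_mono (F.map f) (by rw [← F.map_comp, kernel.condition, F.map_zero]))

theorem IsExactFunctor.isZero_obj_cokernel {F : A ⥤ B} (hF : IsExactFunctor F) {X Y : A}
    (f : X ⟶ Y) [Epi (F.map f)] : IsZero (F.obj (cokernel f)) := by
  have := hF.additive
  have := hF.epi_map (cokernel.π f)
  exact IsZero.of_epi_eq_zero _
    (zero_of_epi_comp (F.map f) (by rw [← F.map_comp, cokernel.condition, F.map_zero]))

section Adjunction

variable {𝒞 𝒟 : Type*} [Category 𝒞] [Category 𝒟]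

theorem _root_.CategoryTheory.Adjunction.isZero_obj_of_forall_isZero_obj_left
    [HasZeroMorphisms 𝒞] [HasZeroMorphisms 𝒟] {F : 𝒞 ⥤ 𝒟} {G : 𝒟 ⥤ 𝒞} (adj : F ⊣ G)
    (hF : ∀ Y, IsZero (F.obj Y)) (Z : 𝒟) : IsZero (G.obj Z) := by
  have := adj.isRightAdjoint
  rw [IsZero.iff_id_eq_zero, ← adj.right_triangle_components Z,
    (hF (G.obj Z)).eq_of_src (adj.counit.app Z) 0, G.map_zero, comp_zero]

theorem _root_.CategoryTheory.Adjunction.bijective_comp_counit_app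
    {L : 𝒞 ⥤ 𝒟} {G : 𝒟 ⥤ 𝒞} (adj : L ⊣ G) [L.Full] [L.Faithful] {K : 𝒟}
    (hK : L.essImage K) (X : 𝒟) :
    Function.Bijective (fun f : K ⟶ L.obj (G.obj X) ↦ f ≫ adj.counit.app X) := by
  obtain ⟨Z, ⟨e⟩⟩ := hK
  let E := ((e.symm.homFromEquiv (Z := L.obj (G.obj X))).trans
      (Functor.FullyFaithful.ofFullyFaithful L).homEquiv.symm).trans
    ((adj.homEquiv _ _).symm.trans (e.homFromEquiv (Z := X)))
  have hE : ⇑E = fun f ↦ f ≫ adj.counit.app X := by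
    funext f
    simp [E, Adjunction.homEquiv_counit]
  exact hE ▸ E.bijective

end Adjunction

namespace Recollement

variable (R : Recollement A B C)

instance : R.iStar.Full := R.iStar_full
instance : R.iStar.Faithful := R.iStar_faithful
instance : R.jStar.Full := R.jStar_full
instance : R.jStar.Faithful := R.jStar_faithful

theorem mem_essImage_iStar_of_isZero {K : B} (hK : IsZero (R.jUStar.obj K)) :
    R.iStar.essImage K :=
  (R.essIm_iStar_eq_ker_jUStar K).2 ⟨hK.isoZero⟩

theorem isZero_jUStar_obj_iStar_obj (Y : A) : IsZero (R.jUStar.obj (R.iStar.obj Y)) :=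
  let ⟨e⟩ := (R.essIm_iStar_eq_ker_jUStar _).1 ⟨Y, ⟨Iso.refl _⟩⟩
  (isZero_zero C).of_iso e

theorem isZero_iShriek_obj_jStar_obj (Z : C) : IsZero (R.iShriek.obj (R.jStar.obj Z)) :=
  (R.adj₂.comp R.adj₄).isZero_obj_of_forall_isZero_obj_left R.isZero_jUStar_obj_iStar_obj Z

theorem counit_comp_unit (X : B) : R.adj₂.counit.app X ≫ R.adj₄.unit.app X = 0 := by
  have := R.jStar_additive
  calc R.adj₂.counit.app X ≫ R.adj₄.unit.app X
      = R.adj₄.unit.app (R.iStar.obj (R.iShriek.obj X)) ≫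
          R.jStar.map (R.jUStar.map (R.adj₂.counit.app X)) :=
        (R.adj₄.unit_naturality _).symm
    _ = 0 := by
      rw [(R.jStar.map_isZero (R.isZero_jUStar_obj_iStar_obj _)).eq_of_tgt (R.adj₄.unit.app _) 0,
        zero_comp]

theorem mono_counit_app (X : B) : Mono (R.adj₂.counit.app X) := by
  have := mono_of_source_iso_zero (R.jUStar.map (R.adj₂.counit.app X))
    (R.isZero_jUStar_obj_iStar_obj _).isoZero
  have hK :=
    R.mem_essImage_iStar_of_isZero (R.jUStar_exact.isZero_obj_kernel (R.adj₂.counit.app X))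
  refine Abelian.mono_of_kernel_ι_eq_zero _ ((R.adj₂.bijective_comp_counit_app hK X).1 ?_)
  simp

theorem epi_unit_app (hiS : IsExactFunctor R.iShriek) (X : B) : Epi (R.adj₄.unit.app X) := by
  have := epi_of_target_iso_zero (R.iShriek.map (R.adj₄.unit.app X))
    (R.isZero_iShriek_obj_jStar_obj _).isoZero
  have hQ :=
    R.mem_essImage_iStar_of_isZero (R.jUStar_exact.isZero_obj_cokernel (R.adj₄.unit.app X))
  have := R.adj₂.isLeftAdjoint
  have := (R.adj₂.isIso_counit_app_iff_mem_essImage).2 hQ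
  exact Preadditive.epi_of_isZero_cokernel _ ((R.iStar.map_isZero
    (hiS.isZero_obj_cokernel (R.adj₄.unit.app X))).of_iso
      (asIso (R.adj₂.counit.app (cokernel (R.adj₄.unit.app X)))).symm)

theorem exact_counit_unit (X : B) :
    (ShortComplex.mk _ _ (R.counit_comp_unit X)).Exact := by
  have := R.mono_counit_app X
  have hK :=
    R.mem_essImage_iStar_of_isZero (R.jUStar_exact.isZero_obj_kernel (R.adj₄.unit.app X))
  obtain ⟨v, hv⟩ := (R.adj₂.bijective_comp_counit_app hK X).2 (kernel.ι _)
  refine ShortComplex.exact_of_f_is_kernel _ (KernelFork.IsLimit.ofι' _ _ fun k hk ↦ ?_)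
  exact ⟨kernel.lift _ k hk ≫ v, by simp [hv]⟩

end Recollement

/-- if `i^!` is exact, `0 → i_* i^! X → X → j_* j^* X → 0` is exact. -/
theorem counit_unit_shortExact_of_iShriek_exact
    (R : Recollement A B C) (hiS : IsExactFunctor R.iShriek) (X : B) :
    ∃ w : R.adj₂.counit.app X ≫ R.adj₄.unit.app X = 0,
      (ShortComplex.mk (R.adj₂.counit.app X) (R.adj₄.unit.app X) w).ShortExact :=
  ⟨R.counit_comp_unit X,
    { exact := R.exact_counit_unit X
      mono_f := R.mono_counit_app X
      epi_g := R.epi_unit_app hiS X }⟩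

end PaperRecollement
end

section
/- Let (A, B, C) be a recollement of abelian categories in which A, B and C all have enough projectives and enough injectives, and suppose i^* and i^! are exact. If T is a pseudo cluster tilting subcategory of B such that every object of j_*(j^*(T)) lies in T and every object of i_*(i^*(T)) lies in T, then j^*(T) is a pseudo cluster tilting subcategory of C. -/
/-!
Since `j_*` is fully faithful, the counit `j^* j_* ⟶ 𝟭` is an isomorphism. Applying the exact
functor `j^*` to the `T`-approximation sequences of `j_* X` therefore gives short exact sequences
starting or ending at `X ≅ j^* j_* X`. They are `j^*(T)`-approximations because a morphism
`h : X ⟶ j^* T'` is recovered, up to the counit isomorphisms, as `j^*` of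
`j_* h : j_* X ⟶ j_* j^* T'`, and `j_* j^* T'` lies in `T`, so `j_* h` factors through the
approximation in `B`.
-/

open CategoryTheory CategoryTheory.Limits CategoryTheory.Abelian ZeroObject

universe v u

namespace PaperRecollement

variable {D : Type u} [Category.{v} D] [Abelian D]

variable {A B C : Type u} [Category.{v} A] [Category.{v} B] [Category.{v} C]
  [Abelian A] [Abelian B] [Abelian C]

section Approximation

variable {𝒞 : Type*} [Category 𝒞]

def IsLeftApproximation (T : Set 𝒞) {X T₁ : 𝒞} (f : X ⟶ T₁) : Prop :=
  ∀ T' ∈ T, ∀ h : X ⟶ T', ∃ k : T₁ ⟶ T', f ≫ k = h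

def IsRightApproximation (T : Set 𝒞) {T₄ X : 𝒞} (g : T₄ ⟶ X) : Prop :=
  ∀ T' ∈ T, ∀ h : T' ⟶ X, ∃ k : T' ⟶ T₄, k ≫ g = h

variable {𝒟 : Type*} [Category 𝒟] {F : 𝒞 ⥤ 𝒟} {G : 𝒟 ⥤ 𝒞} (adj : F ⊣ G)
  [IsIso adj.counit] {T : Set 𝒞} {S : Set 𝒟}

lemma IsLeftApproximation.inv_counit_comp_map (hGS : ∀ Y ∈ S, G.obj Y ∈ T) {X : 𝒟}
    {T₁ : 𝒞} {f : G.obj X ⟶ T₁} (hf : IsLeftApproximation T f) :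
    IsLeftApproximation S (inv (adj.counit.app X) ≫ F.map f) := by
  intro Y hY h
  obtain ⟨k, hk⟩ := hf _ (hGS Y hY) (G.map h)
  refine ⟨F.map k ≫ adj.counit.app Y, ?_⟩
  rw [Category.assoc, ← F.map_comp_assoc, hk]
  simp

lemma IsRightApproximation.map_comp_counit (hGS : ∀ Y ∈ S, G.obj Y ∈ T) {X : 𝒟}
    {T₄ : 𝒞} {g : T₄ ⟶ G.obj X} (hg : IsRightApproximation T g) :
    IsRightApproximation S (F.map g ≫ adj.counit.app X) := by
  intro Y hY h
  obtain ⟨k, hk⟩ := hg _ (hGS Y hY) (G.map h)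
  refine ⟨inv (adj.counit.app Y) ≫ F.map k, ?_⟩
  rw [Category.assoc, ← F.map_comp_assoc, hk]
  simp

end Approximation

section ShortExact

variable {𝒞 : Type*} [Category 𝒞] [HasZeroMorphisms 𝒞]

lemma shortExact_mk_iso_comp {X' X Y Z : 𝒞} (e : X' ≅ X) {f : X ⟶ Y} {g : Y ⟶ Z}
    {w : f ≫ g = 0} (h : (ShortComplex.mk f g w).ShortExact) :
    (ShortComplex.mk (e.hom ≫ f) g (by rw [Category.assoc, w, comp_zero])).ShortExact :=
  ShortComplex.shortExact_of_iso
    (ShortComplex.isoMk (S₁ := .mk f g w) e.symm (Iso.refl _) (Iso.refl _)) h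

lemma shortExact_mk_comp_iso {X Y Z Z' : 𝒞} (e : Z ≅ Z') {f : X ⟶ Y} {g : Y ⟶ Z}
    {w : f ≫ g = 0} (h : (ShortComplex.mk f g w).ShortExact) :
    (ShortComplex.mk f (g ≫ e.hom) (by rw [← Category.assoc, w, zero_comp])).ShortExact :=
  ShortComplex.shortExact_of_iso
    (ShortComplex.isoMk (S₁ := .mk f g w) (Iso.refl _) (Iso.refl _) e) h

end ShortExact

lemma IsExactFunctor.shortExact_map {F : B ⥤ C} (hF : IsExactFunctor F)
    [F.PreservesZeroMorphisms] {S : ShortComplex B} (hS : S.ShortExact) :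
    (S.map F).ShortExact :=
  hF.preserves_shortExact S.f S.g S.zero _ hS

section imgClass

variable {𝒜 ℬ : Type u} [Category.{v} 𝒜] [Category.{v} ℬ] {F : 𝒜 ⥤ ℬ}

lemma obj_mem_imgClass {S : Set 𝒜} {X : 𝒜} (hX : X ∈ S) : F.obj X ∈ imgClass F S :=
  ⟨X, hX, ⟨Iso.refl _⟩⟩

lemma imgClass_iso_closed (S : Set 𝒜) ⦃X Y : ℬ⦄ (hX : X ∈ imgClass F S)
    (e : Nonempty (X ≅ Y)) : Y ∈ imgClass F S := by
  obtain ⟨X', hX', ⟨e'⟩⟩ := hX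
  exact ⟨X', hX', ⟨e' ≪≫ e.some⟩⟩

lemma zero_mem_imgClass [HasZeroMorphisms 𝒜] [HasZeroMorphisms ℬ] [HasZeroObject 𝒜]
    [HasZeroObject ℬ] [F.PreservesZeroMorphisms] {S : Set 𝒜} (hS : (0 : 𝒜) ∈ S) :
    (0 : ℬ) ∈ imgClass F S :=
  ⟨0, hS, ⟨F.mapZeroObject⟩⟩

lemma biprod_mem_imgClass [HasZeroMorphisms 𝒜] [HasZeroMorphisms ℬ]
    [HasBinaryBiproducts 𝒜] [HasBinaryBiproducts ℬ] [F.PreservesZeroMorphisms]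
    [PreservesBinaryBiproducts F] {S : Set 𝒜}
    (hS : ∀ ⦃X Y : 𝒜⦄, X ∈ S → Y ∈ S → (X ⊞ Y) ∈ S) ⦃X Y : ℬ⦄
    (hX : X ∈ imgClass F S) (hY : Y ∈ imgClass F S) : (X ⊞ Y) ∈ imgClass F S := by
  obtain ⟨X', hX', ⟨e⟩⟩ := hX
  obtain ⟨Y', hY', ⟨e'⟩⟩ := hY
  exact ⟨X' ⊞ Y', hS hX' hY', ⟨F.mapBiprod X' Y' ≪≫ biprod.mapIso e e'⟩⟩

end imgClass

lemma IsPseudoClusterTilting.imgClass_of_adjunction {F : B ⥤ C} {G : C ⥤ B} (adj : F ⊣ G)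
    [IsIso adj.counit] (hF : IsExactFunctor F) {T : Set B} (hT : IsPseudoClusterTilting T)
    (hGFT : imgClass G (imgClass F T) ⊆ T) : IsPseudoClusterTilting (imgClass F T) := by
  have := hF.additive
  have : PreservesBinaryBiproducts F := preservesBinaryBiproducts_of_preservesBiproducts F
  have hGS : ∀ Y ∈ imgClass F T, G.obj Y ∈ T := fun Y hY => hGFT (obj_mem_imgClass hY)
  refine ⟨imgClass_iso_closed T, zero_mem_imgClass hT.zero_mem,
    biprod_mem_imgClass hT.biprod_mem, fun X => ?_, fun X => ?_⟩
  · obtain ⟨T₁, T₂, f, g, w, hfg, hT₁, hT₂, hf⟩ := hT.left_approx (G.obj X)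
    exact ⟨F.obj T₁, F.obj T₂, _, F.map g, _,
      shortExact_mk_iso_comp (asIso (adj.counit.app X)).symm (hF.shortExact_map hfg),
      obj_mem_imgClass hT₁, obj_mem_imgClass hT₂,
      IsLeftApproximation.inv_counit_comp_map adj hGS hf⟩
  · obtain ⟨T₃, T₄, f, g, w, hfg, hT₃, hT₄, hg⟩ := hT.right_approx (G.obj X)
    exact ⟨F.obj T₃, F.obj T₄, F.map f, _, _,
      shortExact_mk_comp_iso (asIso (adj.counit.app X)) (hF.shortExact_map hfg),
      obj_mem_imgClass hT₃, obj_mem_imgClass hT₄,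
      IsRightApproximation.map_comp_counit adj hGS hg⟩

theorem pseudoClusterTilting_jUStar_general
    (R : Recollement A B C)
    (T : Set B) (hT : IsPseudoClusterTilting T)
    (hjT : imgClass R.jStar (imgClass R.jUStar T) ⊆ T) :
    IsPseudoClusterTilting (imgClass R.jUStar T) := by
  have := R.jStar_full
  have := R.jStar_faithful
  exact hT.imgClass_of_adjunction R.adj₄ R.jUStar_exact hjT

/-- `j^*` of a pseudo cluster tilting subcategory is pseudo cluster tilting. -/
theorem pseudoClusterTilting_jUStar
    [EnoughProjectives A] [EnoughInjectives A] [EnoughProjectives B] [EnoughInjectives B]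
    [EnoughProjectives C] [EnoughInjectives C]
    (R : Recollement A B C)
    (hiU : IsExactFunctor R.iUStar) (hiS : IsExactFunctor R.iShriek)
    (T : Set B) (hT : IsPseudoClusterTilting T)
    (hjT : imgClass R.jStar (imgClass R.jUStar T) ⊆ T)
    (hiT : imgClass R.iStar (imgClass R.iUStar T) ⊆ T) :
    IsPseudoClusterTilting (imgClass R.jUStar T) :=
  pseudoClusterTilting_jUStar_general R T hT hjT

end PaperRecollement
end
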